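/- Let n ≥ 2, m, d > 0, and let V be a real orthogonal n×n matrix whose first column is v_1 = (1/√n)·1. Let 0 = λ_1 and λ_k ≥ (n − 3/4)·d²/m for all k ∈ {2,…,n}. Define h_1(t) = (1/d)(1 − e^{−(d/m)t}) and, for k ≥ 2, h_k(t) = (e^{−(d/(2m))t}/(m·ω_{d,k}))·sin(ω_{d,k}·t) with ω_{d,k} := √(4λ_k m − d²)/(2m). Then for every i ∈ {1,…,n} and every t ≥ 0: Σ_{k=1}^n v_{k,i}²·h_k(t)² ≤ (1/(d²n))·(1 − e^{−(d/m)t} + e^{−(2d/m)t}) ≤ 1/(d²n). -/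

import Mathlib

/-- Per-bus nadir bound (inequalities (17)–(18)) in the proof of Theorem 2:
for a homogeneous network with `λₖ ≥ (n − 3/4)d²/m` for `k ≥ 2`, the squared
2-norm of `cᵢ(t) = (v_{k,i} hₖ(t))ₖ` satisfies, for all buses `i` and `t ≥ 0`,
`∑ₖ v_{k,i}² hₖ(t)² ≤ (1/(d²n))(1 − e^{−(d/m)t} + e^{−(2d/m)t}) ≤ 1/(d²n)`. -/
theorem stmt14 (n : ℕ) (hn : 2 ≤ n)
    (m d : ℝ) (hm : 0 < m) (hd : 0 < d)
    (V : Matrix (Fin n) (Fin n) ℝ) (hV : V.transpose * V = 1)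
    (hv1 : ∀ j, V j ⟨0, by omega⟩ = 1 / Real.sqrt n)
    (lam : Fin n → ℝ) (hlam0 : lam ⟨0, by omega⟩ = 0)
    (hlam : ∀ k, k ≠ (⟨0, by omega⟩ : Fin n) →
      ((n : ℝ) - 3 / 4) * d ^ 2 / m ≤ lam k)
    (h : Fin n → ℝ → ℝ)
    (h1def : ∀ t, h ⟨0, by omega⟩ t = (1 / d) * (1 - Real.exp (-(d / m) * t)))
    (hkdef : ∀ k, k ≠ (⟨0, by omega⟩ : Fin n) → ∀ t,
      h k t = Real.exp (-(d / (2 * m)) * t) /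
          (m * (Real.sqrt (4 * lam k * m - d ^ 2) / (2 * m))) *
        Real.sin (Real.sqrt (4 * lam k * m - d ^ 2) / (2 * m) * t)) :
    ∀ i, ∀ t, 0 ≤ t →
      (∑ k, (V i k) ^ 2 * (h k t) ^ 2) ≤
        1 / (d ^ 2 * n) *
          (1 - Real.exp (-(d / m) * t) + Real.exp (-(2 * d / m) * t)) ∧
      1 / (d ^ 2 * n) *
          (1 - Real.exp (-(d / m) * t) + Real.exp (-(2 * d / m) * t)) ≤
        1 / (d ^ 2 * n) := by
  intro i t ht
  have hn0 : (0:ℝ) < n := by positivity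
  have hn1 : (1:ℝ) ≤ (n:ℝ) - 1 := by
    have : (2:ℝ) ≤ n := by exact_mod_cast hn
    linarith
  generalize hEdef : Real.exp (-(d / m) * t) = E
  have hE0 : 0 < E := hEdef ▸ Real.exp_pos _
  have hE1 : E ≤ 1 := by
    rw [← hEdef, show (1:ℝ) = Real.exp 0 from Real.exp_zero.symm]
    apply Real.exp_le_exp.mpr
    have : 0 ≤ d / m * t := by positivity
    nlinarith
  have hE2 : Real.exp (-(2 * d / m) * t) = E ^ 2 := by
    rw [show -(2 * d / m) * t = -(d / m) * t + -(d / m) * t by ring,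
      Real.exp_add, ← hEdef, pow_two]
  -- rows of V are unit vectors
  have hVVt : V * V.transpose = 1 := mul_eq_one_comm.mp hV
  have hrow : ∑ k, (V i k) ^ 2 = 1 := by
    have := congrArg (fun M => M i i) hVVt
    simpa [Matrix.mul_apply, Matrix.transpose_apply, Matrix.one_apply, sq] using this
  have hv10 : (V i (⟨0, by omega⟩ : Fin n)) ^ 2 = 1 / n := by
    rw [hv1 i, div_pow, one_pow, Real.sq_sqrt (le_of_lt hn0)]
  -- bound on h k for k ≠ 0
  have hbound : ∀ k : Fin n, k ≠ (⟨0, by omega⟩ : Fin n) →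
      (h k t) ^ 2 ≤ E / (((n:ℝ) - 1) * d ^ 2) := by
    intro k hk
    have hlk : ((n:ℝ) - 3 / 4) * d ^ 2 ≤ lam k * m := by
      have := hlam k hk
      rw [div_le_iff₀ hm] at this
      linarith
    set w2 := 4 * lam k * m - d ^ 2 with hw2def
    have hw2ge : 4 * ((n:ℝ) - 1) * d ^ 2 ≤ w2 := by
      rw [hw2def]; nlinarith
    have hw2pos : 0 < w2 := by nlinarith
    have hsq : (Real.sqrt w2) ^ 2 = w2 := Real.sq_sqrt (le_of_lt hw2pos)
    have hden : m * (Real.sqrt w2 / (2 * m)) = Real.sqrt w2 / 2 := by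
      field_simp
    have hEp : Real.exp (-(d / (2 * m)) * t) ^ 2 = E := by
      rw [← hEdef, pow_two, ← Real.exp_add]
      congr 1
      field_simp
      ring
    have hinst := hkdef k hk t
    rw [← hw2def] at hinst
    rw [hinst, hden, mul_pow, div_pow, hEp, div_pow, hsq]
    have hsin : Real.sin (Real.sqrt w2 / (2 * m) * t) ^ 2 ≤ 1 :=
      Real.sin_sq_le_one _
    rw [div_mul_eq_mul_div, div_le_div_iff₀ (by positivity) (by positivity)]
    nlinarith [mul_nonneg (mul_nonneg hE0.le (sub_nonneg.mpr hsin))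
        (by positivity : (0:ℝ) ≤ ((n:ℝ) - 1) * d ^ 2),
      mul_le_mul_of_nonneg_left hw2ge hE0.le]
  -- split sum
  have hzero : (⟨0, by omega⟩ : Fin n) ∈ (Finset.univ : Finset (Fin n)) :=
    Finset.mem_univ _
  have hsplit : ∑ k, (V i k) ^ 2 * (h k t) ^ 2 =
      (∑ k ∈ Finset.univ.erase (⟨0, by omega⟩ : Fin n),
        (V i k) ^ 2 * (h k t) ^ 2) +
      (V i (⟨0, by omega⟩ : Fin n)) ^ 2 * (h (⟨0, by omega⟩ : Fin n) t) ^ 2 :=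
    (Finset.sum_erase_add _ _ hzero).symm
  have hsum_erase : ∑ k ∈ Finset.univ.erase (⟨0, by omega⟩ : Fin n),
      (V i k) ^ 2 = 1 - 1 / n := by
    have h2 : (∑ k ∈ Finset.univ.erase (⟨0, by omega⟩ : Fin n), (V i k) ^ 2) +
        (V i (⟨0, by omega⟩ : Fin n)) ^ 2 = 1 := by
      rw [Finset.sum_erase_add _ _ hzero]; exact hrow
    rw [hv10] at h2
    linarith
  have hbound_sum : ∑ k ∈ Finset.univ.erase (⟨0, by omega⟩ : Fin n),
      (V i k) ^ 2 * (h k t) ^ 2 ≤ (1 - 1 / n) * (E / (((n:ℝ) - 1) * d ^ 2)) := by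
    rw [← hsum_erase, Finset.sum_mul]
    apply Finset.sum_le_sum
    intro k hk
    have hk0 : k ≠ (⟨0, by omega⟩ : Fin n) := (Finset.mem_erase.mp hk).1
    exact mul_le_mul_of_nonneg_left (hbound k hk0) (sq_nonneg _)
  have hterm0 : (V i (⟨0, by omega⟩ : Fin n)) ^ 2 *
      (h (⟨0, by omega⟩ : Fin n) t) ^ 2 = (1 / n) * ((1 / d) ^ 2 * (1 - E) ^ 2) := by
    rw [hv10, h1def t, hEdef, mul_pow]
  have heq : (1 - 1 / (n:ℝ)) * (E / (((n:ℝ) - 1) * d ^ 2)) +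
      (1 / n) * ((1 / d) ^ 2 * (1 - E) ^ 2) =
      1 / (d ^ 2 * n) * (1 - E + E ^ 2) := by
    have hne : ((n:ℝ) - 1) ≠ 0 := by linarith
    field_simp
    ring
  constructor
  · rw [hsplit, hterm0, hE2]
    exact le_of_le_of_eq (add_le_add_left hbound_sum _) heq
  · rw [hE2]
    have hpos : 0 ≤ 1 / (d ^ 2 * (n:ℝ)) := by positivity
    have h3 : E ^ 2 ≤ E := by
      calc E ^ 2 = E * E := sq E
        _ ≤ 1 * E := mul_le_mul_of_nonneg_right hE1 hE0.le
        _ = E := one_mul E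
    have hle : 1 - E + E ^ 2 ≤ 1 := by linarith only [h3]
    calc 1 / (d ^ 2 * (n:ℝ)) * (1 - E + E ^ 2) ≤ 1 / (d ^ 2 * (n:ℝ)) * 1 :=
          mul_le_mul_of_nonneg_left hle hpos
      _ = 1 / (d ^ 2 * (n:ℝ)) := mul_one _
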